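/- Let A_K ∈ ℝ^{n×n}, let W = ⟨c_ω, G_ω⟩ ⊂ ℝ^n be a zonotope with G_ω ∈ ℝ^{n×D_ω}, let s be a positive integer, and set Ḡ = [G_ω A_K G_ω A_K² G_ω ⋯ A_K^s G_ω] ∈ ℝ^{n×D} with D = (s+1) D_ω. Put D̄ = D + D_ω + 1 and V = [I_{D̄} −I_{D̄}]. Suppose c ∈ ℝ^n, δ ∈ ℝ^D with δ ≥ 0 componentwise, Δ = diag(δ), and Φ ∈ ℝ^{2D̄×D} satisfy: Ḡ Φᵀ Vᵀ = [ (−c + A_K c + c_ω) A_K Ḡ Δ G_ω ], Φ ≥ 0 entrywise, and Φᵀ 1_{2D̄} ≤ δ componentwise. Then the scaled zonotope ⟨c, Ḡ Δ⟩ is robust positively invariant for the error dynamics z⁺ = A_K z + w with w ∈ W, i.e., A_K ⟨c, Ḡ Δ⟩ ⊕ W ⊆ ⟨c, Ḡ Δ⟩. -/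

import Mathlib

open Matrix Pointwise BigOperators

/-!
A point of `A_K ⟨c, ḠΔ⟩ ⊕ W` has the form `A_K (c + ḠΔξ) + c_ω + G_ω η` with `‖ξ‖∞, ‖η‖∞ ≤ 1`.
Applying the feasibility equation to `u = (1, ξ, η)` rewrites this point as `c + Ḡ ξ'` with
`ξ' = Φᵀ Vᵀ u = Φᵀ (u, -u)`. Since `Φ ≥ 0` and `‖(u, -u)‖∞ ≤ 1`, we get `|ξ'| ≤ Φᵀ 1 ≤ δ`
componentwise, and `c + Ḡ ξ'` with `|ξ'| ≤ δ` is a point of `⟨c, ḠΔ⟩`.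
-/

/-- The zonotope `⟨c, G⟩ = {c + Gξ : ‖ξ‖_∞ ≤ 1}` (sup norm on the Pi type). -/
def zonotope {d D : Type*} [Fintype d] [Fintype D]
    (c : d → ℝ) (G : Matrix d D ℝ) : Set (d → ℝ) :=
  {x | ∃ ξ : D → ℝ, ‖ξ‖ ≤ 1 ∧ x = c + G.mulVec ξ}

theorem norm_le_one_iff_forall_abs_le_one {ι : Type*} [Fintype ι] {ξ : ι → ℝ} :
    ‖ξ‖ ≤ 1 ↔ ∀ i, |ξ i| ≤ 1 := by
  simp only [pi_norm_le_iff_of_nonneg zero_le_one, Real.norm_eq_abs]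

theorem add_mulVec_mem_zonotope_mul_diagonal {d D : Type*} [Fintype d] [Fintype D] [DecidableEq D]
    (c : d → ℝ) (G : Matrix d D ℝ) {δ ξ : D → ℝ} (hξ : ∀ j, |ξ j| ≤ δ j) :
    c + G *ᵥ ξ ∈ zonotope c (G * diagonal δ) := by
  have hδ : ∀ j, 0 ≤ δ j := fun j => (abs_nonneg _).trans (hξ j)
  -- `ξ j / δ j` is the junk value `0` when `δ j = 0`, but then the bound forces `ξ j = 0` too.
  refine ⟨fun j => ξ j / δ j, norm_le_one_iff_forall_abs_le_one.2 fun j => ?_, ?_⟩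
  · rw [abs_div, abs_of_nonneg (hδ j)]
    exact div_le_one_of_le₀ (hξ j) (hδ j)
  · have hscale : diagonal δ *ᵥ (fun j => ξ j / δ j) = ξ := by
      funext j
      rcases (hδ j).eq_or_lt with h0 | hpos
      · simpa [mulVec_diagonal, ← h0] using (abs_nonpos_iff.1 (h0 ▸ hξ j)).symm
      · simp [mulVec_diagonal, mul_div_cancel₀ _ hpos.ne']
    rw [← mulVec_mulVec, hscale]

theorem abs_vecMul_apply_le_sum {m k : Type*} [Fintype m] {Φ : Matrix m k ℝ}
    (hΦ : ∀ r j, 0 ≤ Φ r j) {e : m → ℝ} (he : ∀ r, |e r| ≤ 1) (j : k) :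
    |(e ᵥ* Φ) j| ≤ ∑ r, Φ r j :=
  calc |(e ᵥ* Φ) j| = |∑ r, e r * Φ r j| := rfl
    _ ≤ ∑ r, |e r * Φ r j| := Finset.abs_sum_le_sum_abs _ _
    _ ≤ ∑ r, Φ r j := Finset.sum_le_sum fun r _ => by
      rw [abs_mul, abs_of_nonneg (hΦ r j)]
      exact mul_le_of_le_one_left (hΦ r j) (he r)

theorem transpose_fromCols_one_neg_one_mulVec {ι R : Type*} [Fintype ι] [DecidableEq ι] [Ring R]
    (u : ι → R) : (fromCols (1 : Matrix ι ι R) (-1))ᵀ *ᵥ u = Sum.elim u (-u) := by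
  rw [transpose_fromCols, fromRows_mulVec, transpose_neg, transpose_one, one_mulVec, neg_mulVec,
    one_mulVec]

theorem mulVec_vecMul_sumElim_neg_of_mul_transpose_fromCols_eq {d k ι : Type*} [Fintype k]
    [Fintype ι] [DecidableEq ι] {G : Matrix d k ℝ} {Φ : Matrix (ι ⊕ ι) k ℝ} {M : Matrix d ι ℝ}
    (h : G * (Φᵀ * (fromCols (1 : Matrix ι ι ℝ) (-1))ᵀ : Matrix k ι ℝ) = M) (u : ι → ℝ) :
    G *ᵥ (Sum.elim u (-u) ᵥ* Φ) = M *ᵥ u := by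
  rw [← h, ← transpose_fromCols_one_neg_one_mulVec, ← mulVec_transpose, mulVec_mulVec,
    mulVec_mulVec, Matrix.mul_assoc]
  -- `Φᵀ * Vᵀ` in `h` elaborates with the `CStarMatrix` product, equal to the usual one only by `rfl`.
  rfl

theorem of_sumElim_mulVec_sumElim_one {d D E : Type*} [Fintype D] [Fintype E]
    (a : d → ℝ) (B : Matrix d D ℝ) (C : Matrix d E ℝ) (ξ : D → ℝ) (η : E → ℝ) :
    (Matrix.of fun r j =>
        Sum.elim (fun _ : Unit => a r) (Sum.elim (fun i => B r i) (fun k => C r k)) j) *ᵥ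
        Sum.elim (fun _ => 1) (Sum.elim ξ η) = a + B *ᵥ ξ + C *ᵥ η := by
  funext r
  simp [mulVec, dotProduct, Fintype.sum_sum_type, add_assoc]

theorem zonotopic_rpi_general
    {n Dω : ℕ} (s : ℕ)
    (AK : Matrix (Fin n) (Fin n) ℝ)
    (cω : Fin n → ℝ) (Gω : Matrix (Fin n) (Fin Dω) ℝ)
    (Gbar : Matrix (Fin n) (Fin (s + 1) × Fin Dω) ℝ)
    (c : Fin n → ℝ)
    (δ : Fin (s + 1) × Fin Dω → ℝ)
    (Φ : Matrix ((Unit ⊕ (Fin (s + 1) × Fin Dω) ⊕ Fin Dω)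
                 ⊕ (Unit ⊕ (Fin (s + 1) × Fin Dω) ⊕ Fin Dω))
        (Fin (s + 1) × Fin Dω) ℝ)
    (hΦeq : Gbar * (Φᵀ * (Matrix.fromCols
        (1 : Matrix (Unit ⊕ (Fin (s + 1) × Fin Dω) ⊕ Fin Dω)
             (Unit ⊕ (Fin (s + 1) × Fin Dω) ⊕ Fin Dω) ℝ) (-1))ᵀ :
          Matrix (Fin (s + 1) × Fin Dω) (Unit ⊕ (Fin (s + 1) × Fin Dω) ⊕ Fin Dω) ℝ)
      = Matrix.of fun r j =>
          Sum.elim (fun _ : Unit => -c r + AK.mulVec c r + cω r)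
            (Sum.elim (fun lk => (AK * Gbar * Matrix.diagonal δ) r lk)
                      (fun k => Gω r k)) j)
    (hΦpos : ∀ r j, 0 ≤ Φ r j)
    (hΦsum : ∀ j, ∑ r, Φ r j ≤ δ j) :
    (AK.mulVec '' zonotope c (Gbar * Matrix.diagonal δ)) + zonotope cω Gω
      ⊆ zonotope c (Gbar * Matrix.diagonal δ) := by
  rintro _ ⟨_, ⟨_, ⟨ξ, hξ, rfl⟩, rfl⟩, _, ⟨η, hη, rfl⟩, rfl⟩
  have key := mulVec_vecMul_sumElim_neg_of_mul_transpose_fromCols_eq hΦeq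
    (Sum.elim (fun _ => 1) (Sum.elim ξ η))
  rw [of_sumElim_mulVec_sumElim_one] at key
  set u := Sum.elim (fun _ : Unit => (1 : ℝ)) (Sum.elim ξ η)
  have hu : ∀ i, |u i| ≤ 1 := by
    rw [norm_le_one_iff_forall_abs_le_one] at hξ hη
    rintro (_ | j | k) <;> simp [u, hξ, hη]
  have he : ∀ r, |Sum.elim u (-u) r| ≤ 1 := by
    rintro (i | i) <;> simpa using hu i
  convert add_mulVec_mem_zonotope_mul_diagonal c Gbar
    (fun j => (abs_vecMul_apply_le_sum hΦpos he j).trans (hΦsum j)) using 1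
  rw [key]
  ext r
  simp only [Pi.add_apply, mulVec_add, Matrix.mul_assoc, ← mulVec_mulVec]
  ring

/-- Proposition 5: if `(c, δ, Φ)` satisfy the linear feasibility conditions
`Ḡ Φᵀ Vᵀ = [ (−c + A_K c + c_ω)  A_K Ḡ Δ  G_ω ]`, `Φ ≥ 0`, `Φᵀ 1 ≤ δ`,
where `Ḡ = [G_ω  A_K G_ω ⋯ A_K^s G_ω]` (columns indexed by `Fin (s+1) × Fin Dω`)
and the `D̄ = 1 + D + Dω` block columns are indexed by
`Unit ⊕ (Fin (s+1) × Fin Dω) ⊕ Fin Dω`, then `⟨c, ḠΔ⟩` is RPI: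
`A_K ⟨c, ḠΔ⟩ ⊕ W ⊆ ⟨c, ḠΔ⟩`. -/
theorem zonotopic_rpi
    {n Dω : ℕ} (s : ℕ) (hs : 1 ≤ s)
    (AK : Matrix (Fin n) (Fin n) ℝ)
    (cω : Fin n → ℝ) (Gω : Matrix (Fin n) (Fin Dω) ℝ)
    (Gbar : Matrix (Fin n) (Fin (s + 1) × Fin Dω) ℝ)
    (hGbar : Gbar = Matrix.of fun r lk => ((AK ^ (lk.1 : ℕ)) * Gω) r lk.2)
    (c : Fin n → ℝ)
    (δ : Fin (s + 1) × Fin Dω → ℝ) (hδ : ∀ j, 0 ≤ δ j)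
    (Φ : Matrix ((Unit ⊕ (Fin (s + 1) × Fin Dω) ⊕ Fin Dω)
                 ⊕ (Unit ⊕ (Fin (s + 1) × Fin Dω) ⊕ Fin Dω))
        (Fin (s + 1) × Fin Dω) ℝ)
    (hΦeq : Gbar * (Φᵀ * (Matrix.fromCols
        (1 : Matrix (Unit ⊕ (Fin (s + 1) × Fin Dω) ⊕ Fin Dω)
             (Unit ⊕ (Fin (s + 1) × Fin Dω) ⊕ Fin Dω) ℝ) (-1))ᵀ :
          Matrix (Fin (s + 1) × Fin Dω) (Unit ⊕ (Fin (s + 1) × Fin Dω) ⊕ Fin Dω) ℝ)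
      = Matrix.of fun r j =>
          Sum.elim (fun _ : Unit => -c r + AK.mulVec c r + cω r)
            (Sum.elim (fun lk => (AK * Gbar * Matrix.diagonal δ) r lk)
                      (fun k => Gω r k)) j)
    (hΦpos : ∀ r j, 0 ≤ Φ r j)
    (hΦsum : ∀ j, ∑ r, Φ r j ≤ δ j) :
    (AK.mulVec '' zonotope c (Gbar * Matrix.diagonal δ)) + zonotope cω Gω
      ⊆ zonotope c (Gbar * Matrix.diagonal δ) :=
  zonotopic_rpi_general s AK cω Gω Gbar c δ Φ hΦeq hΦpos hΦsum
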